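/- arXiv:1611.07713 — 2 statements merged into one kernel-verified Lean document; each statement's English description precedes it below -/
import Mathlib

section
/- There exist positive real algebraic numbers a, b, c with a ≠ 1 and b ≠ 1 such that a^(a^a) * b^(b^b) = c^(c^c); namely a = b = 1/2 and c = 1/4. -/
/-! For `c = a²` one has `c ^ y = a ^ (2 y)`, so `c ^ c = a ^ (2 a²)`, which equals `a ^ a` when
`a = 1/2`. Then `c ^ (c ^ c) = a ^ (2 a ^ a) = (a ^ (a ^ a))²`. -/

theorem Real.sq_rpow_eq_rpow_two_mul {a : ℝ} (ha : 0 ≤ a) (y : ℝ) : (a ^ 2) ^ y = a ^ (2 * y) := by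
  rw [← Real.rpow_two, ← Real.rpow_mul ha]

theorem quarter_rpow_self : (1 / 4 : ℝ) ^ (1 / 4 : ℝ) = (1 / 2 : ℝ) ^ (1 / 2 : ℝ) := by
  have h := Real.sq_rpow_eq_rpow_two_mul (a := 1 / 2) (by norm_num) (1 / 4)
  norm_num at h ⊢
  exact h

theorem half_tower_mul_self :
    (1 / 2 : ℝ) ^ ((1 / 2 : ℝ) ^ (1 / 2 : ℝ)) * (1 / 2 : ℝ) ^ ((1 / 2 : ℝ) ^ (1 / 2 : ℝ)) =
      (1 / 4 : ℝ) ^ ((1 / 4 : ℝ) ^ (1 / 4 : ℝ)) := by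
  have hc : (1 / 4 : ℝ) = (1 / 2) ^ 2 := by norm_num
  rw [quarter_rpow_self, ← Real.rpow_add (by norm_num), hc,
    Real.sq_rpow_eq_rpow_two_mul (by norm_num), two_mul]

theorem stmt_15 :
    ∃ a b c : ℝ, 0 < a ∧ 0 < b ∧ 0 < c ∧
      IsAlgebraic ℚ a ∧ IsAlgebraic ℚ b ∧ IsAlgebraic ℚ c ∧
      a ≠ 1 ∧ b ≠ 1 ∧ a ^ (a ^ a) * b ^ (b ^ b) = c ^ (c ^ c) ∧
      a = 1/2 ∧ b = 1/2 ∧ c = 1/4 := by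
  have half_algebraic : IsAlgebraic ℚ (1 / 2 : ℝ) := by
    simpa using isAlgebraic_ratCast (A := ℝ) ℚ (1 / 2 : ℚ)
  have quarter_algebraic : IsAlgebraic ℚ (1 / 4 : ℝ) := by
    simpa using isAlgebraic_ratCast (A := ℝ) ℚ (1 / 4 : ℚ)
  exact ⟨1 / 2, 1 / 2, 1 / 4, by norm_num, by norm_num, by norm_num, half_algebraic,
    half_algebraic, quarter_algebraic, by norm_num, by norm_num, half_tower_mul_self, rfl, rfl, rfl⟩
end

section
/- There exist positive real algebraic numbers a, b, c with a ≠ 1 and b ≠ 1 such that a^a * b^b = c^(c^c); namely a = b = 1/sqrt 2 and c = 1/2. -/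
/-!
With `c = 1/2` one has `c ^ c = √c = a`, and `a ^ a * a ^ a = (a * a) ^ a = c ^ a`.
-/

open Real

lemma IsAlgebraic.real_sqrt {R : Type*} [CommRing R] [Algebra R ℝ] {x : ℝ} (hx : 0 ≤ x)
    (h : IsAlgebraic R x) : IsAlgebraic R √x :=
  IsAlgebraic.of_pow two_pos (by rwa [sq_sqrt hx])

lemma sqrt_rpow_mul_sqrt_rpow {x : ℝ} (hx : 0 ≤ x) (y : ℝ) : √x ^ y * √x ^ y = x ^ y := by
  rw [← mul_rpow (sqrt_nonneg x) (sqrt_nonneg x), mul_self_sqrt hx]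

theorem stmt_16 :
    ∃ a b c : ℝ, 0 < a ∧ 0 < b ∧ 0 < c ∧
      IsAlgebraic ℚ a ∧ IsAlgebraic ℚ b ∧ IsAlgebraic ℚ c ∧
      a ≠ 1 ∧ b ≠ 1 ∧ a ^ a * b ^ b = c ^ (c ^ c) ∧
      a = 1/Real.sqrt 2 ∧ b = 1/Real.sqrt 2 ∧ c = 1/2 := by
  have hc_alg : IsAlgebraic ℚ (1 / 2 : ℝ) := by simpa using isAlgebraic_ratCast (R := ℚ) (A := ℝ) (1 / 2)
  have ha_alg : IsAlgebraic ℚ √(1 / 2) := hc_alg.real_sqrt (by norm_num)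
  have ha_ne_one : √(1 / 2) ≠ 1 := by rw [Ne, sqrt_eq_one]; norm_num
  have ha_eq : √(1 / 2) = 1 / √2 := by rw [sqrt_div' 1 zero_le_two, sqrt_one]
  have hcc : (1 / 2 : ℝ) ^ (1 / 2 : ℝ) = √(1 / 2) := (sqrt_eq_rpow _).symm
  refine ⟨√(1 / 2), √(1 / 2), 1 / 2, by positivity, by positivity, by norm_num,
    ha_alg, ha_alg, hc_alg, ha_ne_one, ha_ne_one, ?_, ha_eq, ha_eq, rfl⟩
  rw [sqrt_rpow_mul_sqrt_rpow (by norm_num), hcc]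
end
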